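/- Let X ∈ ℂ^n admit a finite atomic decomposition X = Σ_{j=1}^k |c_j| a(t_j, φ_j) with t_j ∈ [0,1), φ_j ∈ [0,2π), c_j ∈ ℂ. Set T = Σ_{j=1}^k |c_j| a(t_j,φ_j) a(t_j,φ_j)ᴴ and s = Σ_{j=1}^k |c_j|. Then the (n+1)×(n+1) block matrix [[T, X],[Xᴴ, s]] is positive semidefinite and (1/n)·s·Tr(T) = (Σ_{j=1}^k |c_j|)². Consequently, the infimum of (1/n)·s·Tr(Toep(u)) over all (u, s) making [[Toep(u), X],[Xᴴ, s]] positive semidefinite is at most ‖X‖_A². -/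

import Mathlib

open Matrix Complex ComplexConjugate BigOperators
open scoped ComplexOrder

/-- The atom `a(t,φ) ∈ ℂ^n` with `f`-th entry `e^{−i(2πft−φ)}`. -/
noncomputable def atom (n : ℕ) (t φ : ℝ) : Fin n → ℂ :=
  fun f => Complex.exp (-Complex.I * ((2 * Real.pi * (f : ℕ) * t : ℝ) - (φ : ℝ)))

/-- The atomic norm of `X ∈ ℂ^n`. -/
noncomputable def atomicNorm {n : ℕ} (X : Fin n → ℂ) : ℝ :=
  sInf { v : ℝ | ∃ (k : ℕ) (c : Fin k → ℂ) (t φ : Fin k → ℝ),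
    (∀ j, t j ∈ Set.Ico (0 : ℝ) 1) ∧ (∀ j, φ j ∈ Set.Ico (0 : ℝ) (2 * Real.pi)) ∧
    X = ∑ j, (‖c j‖ : ℂ) • atom n (t j) (φ j) ∧
    v = ∑ j, ‖c j‖ }

/-- The Hermitian Toeplitz matrix whose first column is `u`. -/
def toep (n : ℕ) (u : Fin n → ℂ) : Matrix (Fin n) (Fin n) ℂ :=
  Matrix.of fun j k =>
    if (k : ℕ) ≤ (j : ℕ) then
      u ⟨(j : ℕ) - (k : ℕ), lt_of_le_of_lt (Nat.sub_le _ _) j.isLt⟩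
    else
      star (u ⟨(k : ℕ) - (j : ℕ), lt_of_le_of_lt (Nat.sub_le _ _) k.isLt⟩)

/-- The `(n+1)×(n+1)` block matrix `[[T, X],[Xᴴ, s]]`. -/
noncomputable def blockMat {n : ℕ} (T : Matrix (Fin n) (Fin n) ℂ) (X : Fin n → ℂ) (s : ℝ) :
    Matrix (Fin n ⊕ Unit) (Fin n ⊕ Unit) ℂ :=
  Matrix.fromBlocks T (Matrix.replicateCol Unit X) (Matrix.replicateRow Unit (star X))
    (Matrix.of fun _ _ => (s : ℂ))

/-! Lifting each atom `a` to `(a, 1) ∈ ℂ^{n+1}` writes `[[T, X], [Xᴴ, s]]` as the `|c_j|`-weighted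
sum of the rank-one matrices `(a_j, 1)(a_j, 1)ᴴ`, so it is positive semidefinite. The product
`a_f · conj a_g` depends only on `f - g`, so `T` is Toeplitz, and the entries of an atom are
unimodular, so `Tr T = n s`. Every atomic decomposition of `X` is therefore a feasible point of
the semidefinite program with value `(Σ |c_j|)²`, and passing to infima gives the bound. -/

lemma csInf_le_sq_csInf {S T : Set ℝ} (hS : S.Nonempty) (hS₀ : ∀ v ∈ S, 0 ≤ v)
    (hT : BddBelow T) (hST : ∀ v ∈ S, v ^ 2 ∈ T) : sInf T ≤ sInf S ^ 2 :=
  (Real.sqrt_le_left (le_csInf hS hS₀)).1 <|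
    le_csInf hS fun v hv => (Real.sqrt_le_left (hS₀ v hv)).2 (csInf_le hT (hST v hv))

section BlockMatrix

variable {n : ℕ} {ι : Type*} [Fintype ι]

lemma blockMat_sum_smul_vecMulVec (w : ι → ℝ) (a : ι → Fin n → ℂ) :
    blockMat (∑ j, (w j : ℂ) • vecMulVec (a j) (star (a j))) (∑ j, (w j : ℂ) • a j) (∑ j, w j) =
      ∑ j, (w j : ℂ) • vecMulVec (Sum.elim (a j) 1) (star (Sum.elim (a j) 1)) := by
  ext (i | i) (i' | i') <;>
    simp [blockMat, vecMulVec_apply, Matrix.sum_apply, Finset.sum_apply]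

lemma posSemidef_blockMat_sum_smul_vecMulVec {w : ι → ℝ}
    (hw : ∀ j, 0 ≤ w j) (a : ι → Fin n → ℂ) :
    (blockMat (∑ j, (w j : ℂ) • vecMulVec (a j) (star (a j))) (∑ j, (w j : ℂ) • a j)
      (∑ j, w j)).PosSemidef := by
  rw [blockMat_sum_smul_vecMulVec]
  exact posSemidef_sum _ fun j _ =>
    (posSemidef_vecMulVec_self_star _).smul (Complex.zero_le_real.2 (hw j))

lemma Matrix.PosSemidef.blockMat_nonneg {T : Matrix (Fin n) (Fin n) ℂ} {X : Fin n → ℂ} {s : ℝ}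
    (h : (blockMat T X s).PosSemidef) : 0 ≤ s ∧ 0 ≤ T.trace.re :=
  ⟨Complex.zero_le_real.1 (h.diag_nonneg (i := Sum.inr ())),
    (Complex.nonneg_iff.1 (h.submatrix Sum.inl).trace_nonneg).1⟩

end BlockMatrix

lemma toep_sum_smul {n : ℕ} {ι : Type*} [Fintype ι] (w : ι → ℝ) (u : ι → Fin n → ℂ) :
    toep n (∑ j, (w j : ℂ) • u j) = ∑ j, (w j : ℂ) • toep n (u j) := by
  ext f g
  simp only [toep, Matrix.of_apply, Matrix.sum_apply, Matrix.smul_apply, Finset.sum_apply,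
    Pi.smul_apply]
  split_ifs <;> simp [star_sum]

section Atom

variable {n : ℕ}

lemma atom_mul_star_atom (t φ : ℝ) (f g : Fin n) :
    atom n t φ f * star (atom n t φ g) =
      Complex.exp (-Complex.I * (2 * Real.pi * (((f : ℕ) : ℝ) - (g : ℕ)) * t : ℝ)) := by
  rw [atom, atom, RCLike.star_def, ← Complex.exp_conj, ← Complex.exp_add]
  congr 1
  simp only [map_mul, map_neg, Complex.conj_I, map_sub, Complex.conj_ofReal]
  push_cast
  ring

lemma trace_vecMulVec_atom (t φ : ℝ) :
    (vecMulVec (atom n t φ) (star (atom n t φ))).trace = n := by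
  simp only [Matrix.trace, diag_apply, vecMulVec_apply, Pi.star_apply, atom_mul_star_atom]
  simp

lemma vecMulVec_atom_eq_toep (t φ : ℝ) :
    vecMulVec (atom n t φ) (star (atom n t φ)) = toep n (atom n t 0) := by
  ext f g
  simp only [vecMulVec_apply, Pi.star_apply, atom_mul_star_atom, toep, Matrix.of_apply]
  split_ifs with h
  · simp only [atom]
    push_cast [Nat.cast_sub h]
    ring_nf
  · rw [atom, RCLike.star_def, ← Complex.exp_conj]
    congr 1
    simp only [map_mul, map_neg, Complex.conj_I, map_sub, Complex.conj_ofReal]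
    push_cast [Nat.cast_sub (le_of_not_ge h)]
    ring

end Atom

section AtomicGram

variable {n : ℕ} {ι : Type*} [Fintype ι]

lemma sum_smul_vecMulVec_atom_eq_toep (w : ι → ℝ) (t φ : ι → ℝ) :
    ∑ j, (w j : ℂ) • vecMulVec (atom n (t j) (φ j)) (star (atom n (t j) (φ j))) =
      toep n (∑ j, (w j : ℂ) • atom n (t j) 0) := by
  simp only [vecMulVec_atom_eq_toep, toep_sum_smul]

lemma div_mul_re_trace_sum_smul_vecMulVec_atom (hn : n ≠ 0) (w : ι → ℝ) (t φ : ι → ℝ) :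
    1 / (n : ℝ) * (∑ j, w j) *
        (∑ j, (w j : ℂ) • vecMulVec (atom n (t j) (φ j)) (star (atom n (t j) (φ j)))).trace.re =
      (∑ j, w j) ^ 2 := by
  have htrace :
      (∑ j, (w j : ℂ) • vecMulVec (atom n (t j) (φ j)) (star (atom n (t j) (φ j)))).trace =
        ((n * ∑ j, w j : ℝ) : ℂ) := by
    simp only [trace_sum, trace_smul, trace_vecMulVec_atom, smul_eq_mul]
    push_cast
    simp [Finset.mul_sum, mul_comm]
  rw [htrace, Complex.ofReal_re]
  field_simp

end AtomicGram

/-- Feasibility direction of Proposition 1: an atomic decomposition of `X` yields a feasible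
point of the SDP with value `(Σ|c_j|)²`; hence the SDP value is at most `‖X‖_A²`. -/
theorem sdp_le_squared_atomicNorm (n k : ℕ) (hn : 0 < n) (X : Fin n → ℂ)
    (c : Fin k → ℂ) (t φ : Fin k → ℝ)
    (ht : ∀ j, t j ∈ Set.Ico (0 : ℝ) 1) (hφ : ∀ j, φ j ∈ Set.Ico (0 : ℝ) (2 * Real.pi))
    (hX : X = ∑ j, (‖c j‖ : ℂ) • atom n (t j) (φ j)) :
    (blockMat
        (∑ j, (‖c j‖ : ℂ) •
          vecMulVec (atom n (t j) (φ j)) (star (atom n (t j) (φ j))))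
        X (∑ j, ‖c j‖)).PosSemidef ∧
    (1 / (n : ℝ)) * (∑ j, ‖c j‖) *
        ((∑ j, (‖c j‖ : ℂ) •
          vecMulVec (atom n (t j) (φ j)) (star (atom n (t j) (φ j)))).trace).re =
      (∑ j, ‖c j‖) ^ 2 ∧
    sInf { v : ℝ | ∃ (u : Fin n → ℂ) (s : ℝ),
        (blockMat (toep n u) X s).PosSemidef ∧
        v = (1 / (n : ℝ)) * s * ((toep n u).trace).re } ≤ (atomicNorm X) ^ 2 := by
  subst hX
  refine ⟨posSemidef_blockMat_sum_smul_vecMulVec (fun j => norm_nonneg (c j)) _,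
    div_mul_re_trace_sum_smul_vecMulVec_atom hn.ne' _ t φ,
    csInf_le_sq_csInf ⟨_, k, c, t, φ, ht, hφ, rfl, rfl⟩ ?_ ?_ ?_⟩
  · rintro _ ⟨_, c', -, -, -, -, -, rfl⟩
    exact Finset.sum_nonneg fun j _ => norm_nonneg (c' j)
  · refine ⟨0, fun _ ⟨u, s, hpsd, hv⟩ => hv ▸ ?_⟩
    obtain ⟨hs, htr⟩ := hpsd.blockMat_nonneg
    positivity
  · rintro _ ⟨_, c', t', φ', -, -, hX', rfl⟩
    refine ⟨∑ j, (‖c' j‖ : ℂ) • atom n (t' j) 0, ∑ j, ‖c' j‖, ?_, ?_⟩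
    · rw [← sum_smul_vecMulVec_atom_eq_toep _ t' φ', hX']
      exact posSemidef_blockMat_sum_smul_vecMulVec (fun j => norm_nonneg (c' j)) _
    · rw [← sum_smul_vecMulVec_atom_eq_toep _ t' φ',
        div_mul_re_trace_sum_smul_vecMulVec_atom hn.ne']
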